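/- Let σ be the ReLU function and let (b₁, ω₁), …, (bₙ, ωₙ) be pairwise distinct pairs with ωᵢ ∈ {−1, 1} and bᵢ ∈ ℝ such that the hyperplane points −bᵢ/ωᵢ are distinct and lie in the interior of an interval Ω = (α, β). Then the functions 1, σ(ω₁x + b₁), …, σ(ωₙx + bₙ) are linearly independent on Ω. -/

import Mathlib

/-!
The symmetric second difference `f (x + t) + f (x - t) - 2 f x` annihilates constants and,
applied to `y ↦ max 0 (ω y + b)`, gives the hat function `|ω| · max 0 (t - |x - p|)` centred
at the breakpoint `p = -b / ω`. At a breakpoint `p_j`, with `t` smaller than its distance to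
the other breakpoints and to the boundary of the interval, the second difference of a vanishing
combination is therefore `c_j |ω_j| t`, so `c_j = 0`; then the constant term vanishes too.
-/

open Finset

def secondDiff (f : ℝ → ℝ) (x t : ℝ) : ℝ := f (x + t) + f (x - t) - 2 * f x

lemma secondDiff_const_add_sum {ι : Type*} (s : Finset ι) (c₀ : ℝ) (c : ι → ℝ)
    (f : ι → ℝ → ℝ) (x t : ℝ) :
    secondDiff (fun y => c₀ + ∑ i ∈ s, c i * f i y) x t =
      ∑ i ∈ s, c i * secondDiff (f i) x t := by
  simp only [secondDiff, mul_sub, mul_add, sum_add_distrib, sum_sub_distrib, ← mul_sum,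
    mul_left_comm (c _) 2]
  ring

lemma secondDiff_eq_zero_of_eqOn {f : ℝ → ℝ} {U : Set ℝ} (hf : Set.EqOn f 0 U) {x t : ℝ}
    (hx : x ∈ U) (hplus : x + t ∈ U) (hminus : x - t ∈ U) : secondDiff f x t = 0 := by
  simp [secondDiff, hf hx, hf hplus, hf hminus]

lemma max_zero_add_add_max_zero_sub (u s : ℝ) :
    max 0 (u + s) + max 0 (u - s) - 2 * max 0 u = max 0 (|s| - |u|) := by
  rcases abs_cases u with ⟨hu, hu₀⟩ | ⟨hu, hu₀⟩ <;>
    rcases abs_cases s with ⟨hs, hs₀⟩ | ⟨hs, hs₀⟩ <;>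
    rw [hu, hs] <;> simp only [max_def] <;> split_ifs <;> linarith

lemma secondDiff_relu_affine {ω : ℝ} (hω : ω ≠ 0) (b x : ℝ) {t : ℝ} (ht : 0 ≤ t) :
    secondDiff (fun y => max 0 (ω * y + b)) x t = |ω| * max 0 (t - |x - -b / ω|) := by
  have hbreak : ω * x + b = ω * (x - -b / ω) := by field_simp; ring
  calc secondDiff (fun y => max 0 (ω * y + b)) x t
      = max 0 ((ω * x + b) + ω * t) + max 0 ((ω * x + b) - ω * t) - 2 * max 0 (ω * x + b) := by
        simp only [secondDiff]; ring_nf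
    _ = max 0 (|ω| * t - |ω| * |x - -b / ω|) := by
        rw [max_zero_add_add_max_zero_sub, hbreak, abs_mul, abs_mul, abs_of_nonneg ht]
    _ = |ω| * max 0 (t - |x - -b / ω|) := by
        rw [← mul_sub, mul_max_of_nonneg _ _ (abs_nonneg ω), mul_zero]

lemma exists_pos_add_sub_mem_forall_le_abs_sub {U s : Set ℝ} (hU : IsOpen U) (hs : s.Finite)
    {p : ℝ} (hpU : p ∈ U) (hps : p ∉ s) :
    ∃ t > 0, p + t ∈ U ∧ p - t ∈ U ∧ ∀ q ∈ s, t ≤ |q - p| := by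
  obtain ⟨ε, hε, hball⟩ := Metric.isOpen_iff.1 (hU.sdiff hs.isClosed) p ⟨hpU, hps⟩
  have hmem : ∀ q, |q - p| < ε → q ∈ U \ s := fun q hq =>
    hball (by rwa [Metric.mem_ball, Real.dist_eq])
  refine ⟨ε / 2, half_pos hε, (hmem _ ?_).1, (hmem _ ?_).1, fun q hq => ?_⟩
  · rw [add_sub_cancel_left, abs_of_pos (half_pos hε)]; linarith
  · rw [sub_sub_cancel_left, abs_neg, abs_of_pos (half_pos hε)]; linarith
  · by_contra! hlt
    exact (hmem q (hlt.trans (half_lt_self hε))).2 hq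

lemma coeff_eq_zero_of_relu_combination_eqOn_zero {ι : Type*} [Fintype ι] {U : Set ℝ}
    (hU : IsOpen U) {ω b c : ι → ℝ} {c₀ : ℝ} (hω : ∀ i, ω i ≠ 0)
    (h : Set.EqOn (fun x => c₀ + ∑ i, c i * max 0 (ω i * x + b i)) 0 U) {j : ι}
    (hj : -b j / ω j ∈ U) (hsep : ∀ i ≠ j, -b i / ω i ≠ -b j / ω j) : c j = 0 := by
  set p : ι → ℝ := fun i => -b i / ω i
  obtain ⟨t, ht, hplus, hminus, hfar⟩ := exists_pos_add_sub_mem_forall_le_abs_sub hU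
    (Set.toFinite (p '' {i | i ≠ j})) hj (by rintro ⟨i, hi, hpi⟩; exact hsep i hi hpi)
  have hzero : ∑ i, c i * secondDiff (fun y => max 0 (ω i * y + b i)) (p j) t = 0 := by
    rw [← secondDiff_const_add_sum]
    exact secondDiff_eq_zero_of_eqOn h hj hplus hminus
  have hhat : ∀ i, secondDiff (fun y => max 0 (ω i * y + b i)) (p j) t
      = |ω i| * max 0 (t - |p j - p i|) := fun i => secondDiff_relu_affine (hω i) _ _ ht.le
  rw [sum_eq_single j (fun i _ hi => ?_) (by simp), hhat, sub_self, abs_zero, sub_zero,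
    max_eq_right ht.le] at hzero
  · simpa [hω j, ht.ne'] using hzero
  · have := hfar (p i) ⟨i, hi, rfl⟩
    rw [hhat, abs_sub_comm, max_eq_left (by linarith), mul_zero, mul_zero]

theorem stmt_16 (n : ℕ) (α β : ℝ) (hαβ : α < β)
    (σ : ℝ → ℝ) (hσ : ∀ s, σ s = max 0 s)
    (ω b : Fin n → ℝ) (hω : ∀ i, ω i = 1 ∨ ω i = -1)
    (hin : ∀ i, -(b i) / ω i ∈ Set.Ioo α β)
    (hdist : ∀ i j, i ≠ j → -(b i) / ω i ≠ -(b j) / ω j)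
    (c₀ : ℝ) (c : Fin n → ℝ)
    (h : ∀ x ∈ Set.Ioo α β, c₀ + ∑ i, c i * σ (ω i * x + b i) = 0) :
    c₀ = 0 ∧ ∀ i, c i = 0 := by
  obtain rfl : σ = fun s => max 0 s := funext hσ
  have hω₀ : ∀ i, ω i ≠ 0 := fun i => by rcases hω i with h | h <;> simp [h]
  have hc : ∀ i, c i = 0 := fun i =>
    coeff_eq_zero_of_relu_combination_eqOn_zero isOpen_Ioo hω₀ h (hin i) (hdist · i)
  refine ⟨?_, hc⟩
  simpa [hc] using h ((α + β) / 2) ⟨by linarith, by linarith⟩
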